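/- arXiv:2407.01121 — 4 statements merged into one kernel-verified Lean document; each statement's English description precedes it below -/
import Mathlib

section
/- Let G be a graph of odd order. If G contains an independent set S of size three such that G − v has a perfect matching for every v ∈ S, then G ⊠ K_3 is not equimatchable. -/
open SimpleGraph

variable {V : Type*} {W : Type*}

/-- The strong product of two simple graphs. -/
def strongProd (G : SimpleGraph V) (H : SimpleGraph W) : SimpleGraph (V × W) where
  Adj x y := x ≠ y ∧ (x.1 = y.1 ∨ G.Adj x.1 y.1) ∧ (x.2 = y.2 ∨ H.Adj x.2 y.2)
  symm := ⟨fun x y ⟨hne, h1, h2⟩ =>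
    ⟨hne.symm, h1.imp Eq.symm (fun h => h.symm), h2.imp Eq.symm (fun h => h.symm)⟩⟩
  loopless := ⟨fun x h => h.1 rfl⟩

/-- A dominating set: every vertex outside has a neighbor inside. -/
def IsDomSet (G : SimpleGraph V) (D : Set V) : Prop :=
  ∀ v, v ∉ D → ∃ u ∈ D, G.Adj u v

/-- A minimal dominating set. -/
def IsMinlDomSet (G : SimpleGraph V) (D : Set V) : Prop :=
  IsDomSet G D ∧ ∀ D', D' ⊂ D → ¬ IsDomSet G D'

/-- A graph is well-dominated if every minimal dominating set has minimum cardinality. -/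
def WellDominated (G : SimpleGraph V) : Prop :=
  ∀ D D' : Set V, IsMinlDomSet G D → IsDomSet G D' → D.ncard ≤ D'.ncard

/-- The domination number. -/
noncomputable def domNum (G : SimpleGraph V) : ℕ :=
  sInf {n | ∃ D : Set V, IsDomSet G D ∧ D.ncard = n}

/-- The closed neighborhood of a vertex. -/
def closedNbhd (G : SimpleGraph V) (v : V) : Set V := insert v (G.neighborSet v)

/-- `G` is trivially well-dominated via the vertices `u 0, …, u (t-1)`:
their closed neighborhoods are cliques and partition `V`. -/
def TriviallyWellDominatedWith (G : SimpleGraph V) {t : ℕ} (u : Fin t → V) : Prop :=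
  (∀ i, G.IsClique (closedNbhd G (u i))) ∧ (∀ v : V, ∃! i, v ∈ closedNbhd G (u i))

def TriviallyWellDominated (G : SimpleGraph V) : Prop :=
  ∃ (t : ℕ) (u : Fin t → V), TriviallyWellDominatedWith G u

/-- An edge dominating set: every edge of `G` not in `F` shares an endpoint
with some edge of `F`. -/
def IsEDS (G : SimpleGraph V) (F : Set (Sym2 V)) : Prop :=
  F ⊆ G.edgeSet ∧ ∀ e ∈ G.edgeSet, e ∉ F → ∃ f ∈ F, ∃ v, v ∈ e ∧ v ∈ f

/-- A minimal edge dominating set. -/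
def IsMinlEDS (G : SimpleGraph V) (F : Set (Sym2 V)) : Prop :=
  IsEDS G F ∧ ∀ F', F' ⊂ F → ¬ IsEDS G F'

/-- Well-edge-dominated: every minimal edge dominating set has minimum cardinality. -/
def WellEdgeDominated (G : SimpleGraph V) : Prop :=
  ∀ F F' : Set (Sym2 V), IsMinlEDS G F → IsEDS G F' → F.ncard ≤ F'.ncard

/-- A matching, as a set of pairwise nonadjacent edges. -/
def IsMatchingSet (G : SimpleGraph V) (M : Set (Sym2 V)) : Prop :=
  M ⊆ G.edgeSet ∧ ∀ e ∈ M, ∀ f ∈ M, e ≠ f → ∀ v : V, ¬ (v ∈ e ∧ v ∈ f)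

/-- A maximal matching. -/
def IsMaxlMatching (G : SimpleGraph V) (M : Set (Sym2 V)) : Prop :=
  IsMatchingSet G M ∧ ∀ M', M ⊆ M' → IsMatchingSet G M' → M' = M

/-- A maximum matching. -/
def IsMaxMatching (G : SimpleGraph V) (M : Set (Sym2 V)) : Prop :=
  IsMatchingSet G M ∧ ∀ M', IsMatchingSet G M' → M'.ncard ≤ M.ncard

/-- Equimatchable: every maximal matching is maximum. -/
def Equimatchable (G : SimpleGraph V) : Prop :=
  ∀ M M' : Set (Sym2 V), IsMaxlMatching G M → IsMatchingSet G M' → M'.ncard ≤ M.ncard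

/-- The set of endpoints of the edges of `M`. -/
def mVerts (M : Set (Sym2 V)) : Set V := {v | ∃ e ∈ M, v ∈ e}

/-- A perfect matching covers every vertex. -/
def IsPerfectMatchingSet (G : SimpleGraph V) (M : Set (Sym2 V)) : Prop :=
  IsMatchingSet G M ∧ ∀ v : V, v ∈ mVerts M

/-- A near-perfect matching covers all vertices but exactly one. -/
def IsNearPerfectMatchingSet (G : SimpleGraph V) (M : Set (Sym2 V)) : Prop :=
  IsMatchingSet G M ∧ ∃ w : V, mVerts M = {w}ᶜ

/-- The matching number. -/
noncomputable def matchNum (G : SimpleGraph V) : ℕ :=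
  sSup {n | ∃ M : Set (Sym2 V), IsMatchingSet G M ∧ M.ncard = n}

/-- The independence number. -/
noncomputable def indepNum (G : SimpleGraph V) : ℕ :=
  sSup {n | ∃ S : Set V, (S.Pairwise fun u v => ¬ G.Adj u v) ∧ S.ncard = n}

/-- `G` with a set of vertices deleted (induced subgraph on the complement). -/
abbrev delVerts (G : SimpleGraph V) (S : Set V) : SimpleGraph ↥(Sᶜ) := G.induce Sᶜ

/-- Factor-critical: deleting any vertex leaves a graph with a perfect matching. -/
def FactorCritical (G : SimpleGraph V) : Prop :=
  ∀ v : V, ∃ M, IsPerfectMatchingSet (delVerts G {v}) M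

/-- 2-connected: at least three vertices, connected, and no cutvertex. -/
def TwoConnected (G : SimpleGraph V) [Fintype V] : Prop :=
  3 ≤ Fintype.card V ∧ G.Connected ∧ ∀ v : V, (delVerts G {v}).Connected

/-! Let `a₀, a₁, a₂` be the vertices of `S` and `Nᵢ` a matching of `G` covering every vertex
but `aᵢ`. Putting `Nᵢ` into layer `i` of `G ⊠ K₃` gives a matching whose uncovered vertices
`(a₀, 0), (a₁, 1), (a₂, 2)` have distinct, pairwise nonadjacent first coordinates, hence are
pairwise nonadjacent: the matching is maximal. Replacing layers `1` and `2` by the edges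
`(v, 1)(v, 2)` leaves only `(a₀, 0)` uncovered, so this second matching has one edge more. -/

open Function

lemma mVerts_union (A B : Set (Sym2 V)) : mVerts (A ∪ B) = mVerts A ∪ mVerts B := by
  ext v
  simp only [mVerts, Set.mem_union, Set.mem_ofPred_eq, or_and_right, exists_or]

lemma mVerts_iUnion {ι : Type*} (L : ι → Set (Sym2 V)) :
    mVerts (⋃ i, L i) = ⋃ i, mVerts (L i) := by
  ext v
  simp only [mVerts, Set.mem_iUnion, Set.mem_ofPred_eq]
  exact ⟨fun ⟨e, ⟨i, he⟩, hv⟩ => ⟨i, e, he, hv⟩,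
    fun ⟨i, e, he, hv⟩ => ⟨e, ⟨i, he⟩, hv⟩⟩

lemma mVerts_image_map (f : V → W) (N : Set (Sym2 V)) :
    mVerts (Sym2.map f '' N) = f '' mVerts N := by
  ext v
  simp only [mVerts, Set.mem_ofPred_eq, Set.mem_image]
  constructor
  · rintro ⟨e, ⟨e', he', rfl⟩, hv⟩
    obtain ⟨w, hw, rfl⟩ := Sym2.mem_map.mp hv
    exact ⟨w, ⟨e', he', hw⟩, rfl⟩
  · rintro ⟨w, ⟨e', he', hw⟩, rfl⟩
    exact ⟨Sym2.map f e', ⟨e', he', rfl⟩, Sym2.mem_map.mpr ⟨w, hw, rfl⟩⟩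

namespace IsMatchingSet

variable {G : SimpleGraph V} {M : Set (Sym2 V)}

lemma union {A B : Set (Sym2 V)} (hA : IsMatchingSet G A) (hB : IsMatchingSet G B)
    (hAB : Disjoint (mVerts A) (mVerts B)) : IsMatchingSet G (A ∪ B) := by
  refine ⟨Set.union_subset hA.1 hB.1, ?_⟩
  rintro e (heA | heB) f (hfA | hfB) hef v ⟨hve, hvf⟩
  · exact hA.2 e heA f hfA hef v ⟨hve, hvf⟩
  · exact Set.disjoint_left.mp hAB ⟨e, heA, hve⟩ ⟨f, hfB, hvf⟩
  · exact Set.disjoint_left.mp hAB ⟨f, hfA, hvf⟩ ⟨e, heB, hve⟩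
  · exact hB.2 e heB f hfB hef v ⟨hve, hvf⟩

lemma iUnion {ι : Type*} {L : ι → Set (Sym2 V)} (hL : ∀ i, IsMatchingSet G (L i))
    (hdisj : Pairwise (Disjoint on fun i => mVerts (L i))) : IsMatchingSet G (⋃ i, L i) := by
  refine ⟨Set.iUnion_subset fun i => (hL i).1, ?_⟩
  simp only [Set.mem_iUnion]
  rintro e ⟨i, he⟩ f ⟨j, hf⟩ hef v ⟨hve, hvf⟩
  obtain rfl | hij := eq_or_ne i j
  · exact (hL i).2 e he f hf hef v ⟨hve, hvf⟩
  · exact Set.disjoint_left.mp (hdisj hij) ⟨e, he, hve⟩ ⟨f, hf, hvf⟩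

lemma map {G' : SimpleGraph W} (hM : IsMatchingSet G M) (f : G →g G') (hf : Injective f) :
    IsMatchingSet G' (Sym2.map f '' M) := by
  constructor
  · rintro _ ⟨e, he, rfl⟩
    exact f.map_mem_edgeSet (hM.1 he)
  · rintro _ ⟨e, he, rfl⟩ _ ⟨e', he', rfl⟩ hne w ⟨hwe, hwe'⟩
    obtain ⟨x, hx, rfl⟩ := Sym2.mem_map.mp hwe
    obtain ⟨y, hy, hyx⟩ := Sym2.mem_map.mp hwe'
    obtain rfl : x = y := hf hyx.symm
    exact hM.2 e he e' he' (by rintro rfl; exact hne rfl) x ⟨hx, hy⟩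

lemma two_mul_ncard [Finite V] (hM : IsMatchingSet G M) : 2 * M.ncard = (mVerts M).ncard := by
  classical
  have hverts : mVerts M = ⋃ e ∈ M, (e.toFinset : Set V) := by
    ext v
    simp [mVerts]
  have hdisj : M.PairwiseDisjoint fun e => (e.toFinset : Set V) := by
    intro e he f hf hef
    exact Set.disjoint_left.mpr fun v hve hvf =>
      hM.2 e he f hf hef v ⟨Sym2.mem_toFinset.mp hve, Sym2.mem_toFinset.mp hvf⟩
  have htwo : ∀ e ∈ M, (e.toFinset : Set V).ncard = 2 * 1 := fun e he => by
    rw [Set.ncard_coe_finset,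
      Sym2.card_toFinset_of_not_isDiag e (G.not_isDiag_of_mem_edgeSet (hM.1 he))]
  rw [hverts, M.toFinite.ncard_biUnion (fun _ _ => Set.toFinite _) hdisj, finsum_mem_congr rfl htwo,
    ← mul_finsum_mem' _ _ M.toFinite, finsum_one]

lemma two_mul_ncard_add_ncard_compl_mVerts [Finite V] (hM : IsMatchingSet G M) :
    2 * M.ncard + (mVerts M)ᶜ.ncard = Nat.card V := by
  rw [hM.two_mul_ncard, Set.ncard_add_ncard_compl]

lemma isMaxlMatching (hM : IsMatchingSet G M)
    (hfree : (mVerts M)ᶜ.Pairwise fun u v => ¬ G.Adj u v) : IsMaxlMatching G M := by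
  refine ⟨hM, fun M' hMM' hM' => (Set.Subset.antisymm ?_ hMM')⟩
  intro e heM'
  by_contra heM
  have huncovered : ∀ v ∈ e, v ∈ (mVerts M)ᶜ := by
    rintro v hv ⟨f, hfM, hvf⟩
    exact hM'.2 e heM' f (hMM' hfM) (by rintro rfl; exact heM hfM) v ⟨hv, hvf⟩
  have hadj := hM'.1 heM'
  induction e using Sym2.ind with
  | _ x y =>
    exact hfree (huncovered x (Sym2.mem_mk_left x y)) (huncovered y (Sym2.mem_mk_right x y))
      hadj.ne hadj

end IsMatchingSet

lemma IsPerfectMatchingSet.exists_isMatchingSet_mVerts_eq_compl {G : SimpleGraph V} {s : Set V}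
    {M₀ : Set (Sym2 ↥sᶜ)} (h : IsPerfectMatchingSet (delVerts G s) M₀) :
    ∃ N : Set (Sym2 V), IsMatchingSet G N ∧ mVerts N = sᶜ := by
  refine ⟨_, h.1.map (Embedding.induce sᶜ).toHom Subtype.val_injective, ?_⟩
  rw [mVerts_image_map, Set.eq_univ_of_forall h.2]
  exact (Set.image_univ.trans Subtype.range_val)

def strongProdLayer (G : SimpleGraph V) (H : SimpleGraph W) (i : W) : G →g strongProd G H where
  toFun v := (v, i)
  map_rel' h := ⟨fun hvw => h.ne (congrArg Prod.fst hvw), Or.inr h, Or.inl rfl⟩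

lemma strongProdLayer_injective (G : SimpleGraph V) (H : SimpleGraph W) (i : W) :
    Injective (strongProdLayer G H i) :=
  fun _ _ h => congrArg Prod.fst h

@[simp]
lemma strongProdLayer_apply (G : SimpleGraph V) (H : SimpleGraph W) (i : W) (v : V) :
    strongProdLayer G H i v = (v, i) :=
  rfl

section StrongProduct

variable {G : SimpleGraph V} {H : SimpleGraph W}

lemma mVerts_range_fibre (i j : W) :
    mVerts (Set.range fun v : V => s((v, i), (v, j))) = {p | p.2 = i ∨ p.2 = j} := by
  ext ⟨v, k⟩
  simp only [mVerts, Set.mem_range, Set.mem_ofPred_eq, exists_exists_eq_and, Sym2.mem_iff,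
    Prod.mk.injEq]
  constructor
  · rintro ⟨w, ⟨-, rfl⟩ | ⟨-, rfl⟩⟩ <;> simp
  · rintro (rfl | rfl) <;> exact ⟨v, by simp⟩

lemma isMatchingSet_range_fibre {i j : W} (hij : H.Adj i j) :
    IsMatchingSet (strongProd G H) (Set.range fun v : V => s((v, i), (v, j))) := by
  constructor
  · rintro _ ⟨v, rfl⟩
    exact ⟨fun h => hij.ne (congrArg Prod.snd h), Or.inl rfl, Or.inr hij⟩
  · rintro _ ⟨v, rfl⟩ _ ⟨w, rfl⟩ hne p ⟨hpv, hpw⟩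
    have hv : p.1 = v := by rcases Sym2.mem_iff.mp hpv with rfl | rfl <;> rfl
    have hw : p.1 = w := by rcases Sym2.mem_iff.mp hpw with rfl | rfl <;> rfl
    exact hne (by rw [← hv, ← hw])

lemma isMatchingSet_layer_union_range_fibre {N : Set (Sym2 V)} (hN : IsMatchingSet G N)
    {i j k : W} (hjk : H.Adj j k) (hij : i ≠ j) (hik : i ≠ k) :
    IsMatchingSet (strongProd G H)
      (Sym2.map (strongProdLayer G H i) '' N ∪ Set.range fun v : V => s((v, j), (v, k))) := by
  refine (hN.map _ (strongProdLayer_injective G H i)).union (isMatchingSet_range_fibre hjk) ?_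
  rw [mVerts_image_map, mVerts_range_fibre, Set.disjoint_left]
  rintro _ ⟨v, -, rfl⟩ (h | h)
  exacts [hij h, hik h]

variable {s : W → V} {N : W → Set (Sym2 V)}

lemma mVerts_iUnion_layers (hN : ∀ i, mVerts (N i) = {s i}ᶜ) :
    mVerts (⋃ i, Sym2.map (strongProdLayer G H i) '' N i) = (Set.range fun i => (s i, i))ᶜ := by
  ext ⟨v, k⟩
  simp [mVerts_iUnion, mVerts_image_map, hN, eq_comm]

lemma isMaxlMatching_iUnion_layers (hs : Injective s)
    (hsindep : (Set.range s).Pairwise fun u v => ¬ G.Adj u v)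
    (hNm : ∀ i, IsMatchingSet G (N i)) (hN : ∀ i, mVerts (N i) = {s i}ᶜ) :
    IsMaxlMatching (strongProd G H) (⋃ i, Sym2.map (strongProdLayer G H i) '' N i) := by
  refine IsMatchingSet.isMaxlMatching ?_ ?_
  · refine IsMatchingSet.iUnion (fun i => (hNm i).map _ (strongProdLayer_injective G H i)) ?_
    intro i j hij
    simp only [onFun, mVerts_image_map, Set.disjoint_left]
    rintro _ ⟨v, -, rfl⟩ ⟨w, -, hwv⟩
    exact hij (congrArg Prod.snd hwv).symm
  · rw [mVerts_iUnion_layers hN, compl_compl]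
    rintro _ ⟨i, rfl⟩ _ ⟨j, rfl⟩ hne ⟨-, hfst, -⟩
    have hij : s i ≠ s j := fun h => hne (by rw [hs h])
    exact hfst.elim hij (hsindep ⟨i, rfl⟩ ⟨j, rfl⟩ hij)

end StrongProduct

theorem stmt13_general [Fintype V] (G : SimpleGraph V)
    (S : Set V) (hScard : S.ncard = 3)
    (hSindep : S.Pairwise fun u v => ¬ G.Adj u v)
    (hpm : ∀ v ∈ S, ∃ M, IsPerfectMatchingSet (delVerts G {v}) M) :
    ¬ Equimatchable (strongProd G (⊤ : SimpleGraph (Fin 3))) := by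
  let e : Fin 3 ≃ S := (Finite.equivFinOfCardEq hScard).symm
  let s : Fin 3 → V := fun i => e i
  have hs : Injective s := Subtype.val_injective.comp e.injective
  have hsS : Set.range s ⊆ S := by rintro _ ⟨i, rfl⟩; exact (e i).2
  choose N hNm hN using fun i =>
    (hpm (s i) (hsS ⟨i, rfl⟩)).choose_spec.exists_isMatchingSet_mVerts_eq_compl
  set M : Set (Sym2 (V × Fin 3)) := ⋃ i, Sym2.map (strongProdLayer G ⊤ i) '' N i
  set M' : Set (Sym2 (V × Fin 3)) :=
    Sym2.map (strongProdLayer G ⊤ 0) '' N 0 ∪ Set.range fun v : V => s((v, 1), (v, 2))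
  have hM : IsMaxlMatching (strongProd G ⊤) M :=
    isMaxlMatching_iUnion_layers hs (hSindep.mono hsS) hNm hN
  have hM' : IsMatchingSet (strongProd G ⊤) M' :=
    isMatchingSet_layer_union_range_fibre (hNm 0) (by decide) (by decide) (by decide)
  have hMcard := hM.1.two_mul_ncard_add_ncard_compl_mVerts
  rw [mVerts_iUnion_layers hN, compl_compl,
    Set.ncard_range_of_injective fun i j h => congrArg Prod.snd h] at hMcard
  have hM'card := hM'.two_mul_ncard_add_ncard_compl_mVerts
  have hM'verts : mVerts M' = {(s 0, 0)}ᶜ := by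
    ext ⟨v, k⟩
    rw [mVerts_union, mVerts_image_map, hN, mVerts_range_fibre]
    fin_cases k <;> simp
  rw [hM'verts, compl_compl, Set.ncard_singleton] at hM'card
  simp only [Nat.card_eq_fintype_card, Fintype.card_fin] at hMcard hM'card
  intro hequi
  have := hequi M M' hM hM'
  omega

theorem stmt13 [Fintype V] (G : SimpleGraph V) (hodd : Odd (Fintype.card V))
    (S : Set V) (hScard : S.ncard = 3)
    (hSindep : S.Pairwise fun u v => ¬ G.Adj u v)
    (hpm : ∀ v ∈ S, ∃ M, IsPerfectMatchingSet (delVerts G {v}) M) :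
    ¬ Equimatchable (strongProd G (⊤ : SimpleGraph (Fin 3))) :=
  stmt13_general G S hScard hSindep hpm
end

section
/- Let G be an odd-order connected equimatchable graph that has a near-perfect matching. If α(G) > 2, then G contains an independent set S of size three such that G − v has a perfect matching for every v ∈ S. -/
open SimpleGraph

variable {V : Type*} {W : Type*}

/-!
Fix a near-perfect matching `M` of `G` missing `x`. Equimatchability says that a matching whose
exposed vertices are pairwise nonadjacent is maximal, hence maximum, hence exposes only one
vertex. Applied to matchings obtained from `M` by flipping an alternating path and trading two
matching edges for one, this shows that every vertex is reached from `x` by an `M`-alternating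
path; so every vertex outside `D(G)` is matched by `M` into `D(G)`, and no two vertices outside
`D(G)` are adjacent. If two vertices lie outside `D(G)`, their partners together with `x` form
an independent triple in `D(G)`; otherwise at most one vertex of a given independent triple lies
outside `D(G)`, and a few more exchanges along a matching trade it for a vertex of `D(G)`.
-/

section

open Set

variable {G : SimpleGraph V} {M M₀ N : Set (Sym2 V)} {S U : Set V}
  {a b c d d' p r t u v w x y z : V}

lemma mem_mVerts_insert : a ∈ mVerts (insert s(b, c) M) ↔ a = b ∨ a = c ∨ a ∈ mVerts M := by
  simp [mVerts, or_assoc]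

lemma mem_mVerts_of_mem (h : s(a, b) ∈ M) : a ∈ mVerts M := ⟨_, h, Sym2.mem_mk_left a b⟩

namespace IsMatchingSet

lemma adj (hM : IsMatchingSet G M) (h : s(a, b) ∈ M) : G.Adj a b := hM.1 h

lemma mono (hM : IsMatchingSet G M) (h : N ⊆ M) : IsMatchingSet G N :=
  ⟨h.trans hM.1, fun e he f hf => hM.2 e (h he) f (h hf)⟩

lemma edge_eq {e f : Sym2 V} (hM : IsMatchingSet G M) (he : e ∈ M) (hf : f ∈ M)
    (hae : a ∈ e) (haf : a ∈ f) : e = f := by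
  by_contra hne
  exact hM.2 e he f hf hne a ⟨hae, haf⟩

lemma partner_eq (hM : IsMatchingSet G M) (h1 : s(a, b) ∈ M) (h2 : s(a, c) ∈ M) : b = c :=
  Sym2.congr_right.mp (hM.edge_eq h1 h2 (Sym2.mem_mk_left a b) (Sym2.mem_mk_left a c))

lemma notMem_mVerts_diff (hM : IsMatchingSet G M) (h : s(a, b) ∈ M) :
    a ∉ mVerts (M \ {s(a, b)}) := by
  rintro ⟨e, ⟨he, hne⟩, hae⟩
  exact hne (hM.edge_eq he h hae (Sym2.mem_mk_left a b))

lemma mVerts_diff_singleton (hM : IsMatchingSet G M) (h : s(a, b) ∈ M) :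
    mVerts (M \ {s(a, b)}) = mVerts M \ {a, b} := by
  ext v
  refine ⟨fun hv => ⟨?_, ?_⟩, fun ⟨⟨e, he, hve⟩, hv⟩ => ⟨e, ⟨he, ?_⟩, hve⟩⟩
  · obtain ⟨e, he, hve⟩ := hv
    exact ⟨e, he.1, hve⟩
  · rintro (rfl | rfl)
    · exact hM.notMem_mVerts_diff h hv
    · exact hM.notMem_mVerts_diff (Sym2.eq_swap ▸ h) (Sym2.eq_swap ▸ hv)
  · rintro rfl
    rcases Sym2.mem_iff.mp hve with rfl | rfl <;> simp at hv

lemma insert_of_notMem (hM : IsMatchingSet G M) (hab : G.Adj a b) (ha : a ∉ mVerts M)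
    (hb : b ∉ mVerts M) : IsMatchingSet G (insert s(a, b) M) := by
  have hdisj : ∀ f ∈ M, ∀ v, v ∈ s(a, b) → v ∉ f := by
    intro f hf v hv hvf
    rcases Sym2.mem_iff.mp hv with rfl | rfl
    exacts [ha ⟨f, hf, hvf⟩, hb ⟨f, hf, hvf⟩]
  refine ⟨insert_subset hab hM.1, ?_⟩
  rintro e (rfl | he) f (rfl | hf) hne v ⟨hve, hvf⟩
  · exact hne rfl
  · exact hdisj f hf v hve hvf
  · exact hdisj e he v hvf hve
  · exact hM.2 e he f hf hne v ⟨hve, hvf⟩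

lemma ncard_mVerts [Finite V] (hM : IsMatchingSet G M) : (mVerts M).ncard = 2 * M.ncard := by
  induction M, M.toFinite using Set.Finite.induction_on with
  | empty => simp [mVerts]
  | @insert e M he hfin ih =>
    obtain ⟨a, b⟩ := e
    have hM' := hM.mono (subset_insert _ M)
    have hdiff : insert s(a, b) M \ {s(a, b)} = M := by simp [he]
    have ha := hM.notMem_mVerts_diff (mem_insert _ M)
    have hb := hM.notMem_mVerts_diff (a := b) (b := a) (by simp)
    rw [hdiff] at ha
    rw [Sym2.eq_swap, hdiff] at hb
    have hmv : mVerts (insert s(a, b) M) = insert a (insert b (mVerts M)) := by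
      ext v; simp only [mem_mVerts_insert, mem_insert_iff]
    rw [hmv, ncard_insert_of_notMem (by simp [(hM.adj (mem_insert _ M)).ne, ha]),
      ncard_insert_of_notMem hb, ncard_insert_of_notMem he, ih hM']
    ring

end IsMatchingSet

def IsMatchingExposing (G : SimpleGraph V) (M : Set (Sym2 V)) (U : Set V) : Prop :=
  IsMatchingSet G M ∧ mVerts M = Uᶜ

namespace IsMatchingExposing

lemma notMem_left (h : IsMatchingExposing G M U) (he : s(a, b) ∈ M) : a ∉ U := by
  simpa [h.2] using mem_mVerts_of_mem he

lemma notMem_right (h : IsMatchingExposing G M U) (he : s(a, b) ∈ M) : b ∉ U :=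
  h.notMem_left (Sym2.eq_swap (a := a) ▸ he)

lemma exists_partner (h : IsMatchingExposing G M U) (ha : a ∉ U) : ∃ b, s(a, b) ∈ M := by
  obtain ⟨e, he, hae⟩ : a ∈ mVerts M := by simpa [h.2] using ha
  obtain ⟨b, rfl⟩ := Sym2.mem_iff_exists.mp hae
  exact ⟨b, he⟩

lemma insert_edge (h : IsMatchingExposing G M U) (ha : a ∈ U) (hb : b ∈ U) (hab : G.Adj a b) :
    IsMatchingExposing G (insert s(a, b) M) (U \ {a, b}) := by
  refine ⟨h.1.insert_of_notMem hab (by simpa [h.2]) (by simpa [h.2]), ?_⟩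
  ext v
  rw [mem_mVerts_insert, h.2]
  grind

lemma diff_edge (h : IsMatchingExposing G M U) (he : s(a, b) ∈ M) :
    IsMatchingExposing G (M \ {s(a, b)}) (insert a (insert b U)) := by
  refine ⟨h.1.mono sdiff_subset, ?_⟩
  rw [h.1.mVerts_diff_singleton he, h.2]
  ext v
  grind

lemma swap (h : IsMatchingExposing G M {x}) (hxy : G.Adj x y) (hyz : s(y, z) ∈ M) :
    IsMatchingExposing G (insert s(x, y) (M \ {s(y, z)})) {z} := by
  have hzx : z ≠ x := h.notMem_right hyz
  have hyz' : y ≠ z := (h.1.adj hyz).ne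
  convert (h.diff_edge hyz).insert_edge (by simp) (by simp) hxy using 1
  ext v
  grind

lemma rewire (h : IsMatchingExposing G M {x}) {a₁ p₁ a₂ p₂ : V} (h₁ : s(a₁, p₁) ∈ M)
    (h₂ : s(a₂, p₂) ∈ M) (hne : s(a₁, p₁) ≠ s(a₂, p₂)) (hp : G.Adj p₁ p₂) :
    IsMatchingExposing G (insert s(p₁, p₂) ((M \ {s(a₁, p₁)}) \ {s(a₂, p₂)})) {x, a₁, a₂} := by
  have h' := h.diff_edge h₁
  have h₂' : s(a₂, p₂) ∈ M \ {s(a₁, p₁)} := ⟨h₂, hne.symm⟩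
  have ha₂ := h'.notMem_left h₂'
  have hp₂ := h'.notMem_right h₂'
  have hp₁ := h.notMem_right h₁
  have ha₁p₁ := (h.1.adj h₁).ne
  have ha₂p₂ := (h.1.adj h₂).ne
  convert (h'.diff_edge h₂').insert_edge (by simp) (by simp) hp using 1
  ext v
  simp only [mem_insert_iff, mem_singleton_iff] at *
  grind

lemma isMaxlMatching (h : IsMatchingExposing G M U) (hU : G.IsIndepSet U) :
    IsMaxlMatching G M := by
  refine ⟨h.1, fun M' hsub hM' => ?_⟩
  by_contra hne
  obtain ⟨e, heM', heM⟩ := exists_of_ssubset (hsub.ssubset_of_ne (Ne.symm hne))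
  have hexp : ∀ a ∈ e, a ∈ U := by
    intro a hae
    by_contra haU
    obtain ⟨f, hf, haf⟩ : a ∈ mVerts M := by rw [h.2]; exact haU
    exact heM (hM'.edge_eq (hsub hf) heM' haf hae ▸ hf)
  obtain ⟨a, b⟩ := e
  have hab := hM'.adj heM'
  exact hU (hexp a (Sym2.mem_mk_left a b)) (hexp b (Sym2.mem_mk_right a b)) hab.ne hab

end IsMatchingExposing

lemma Equimatchable.ncard_le_one_of_isIndepSet [Finite V] (heq : Equimatchable G)
    (h₀ : IsMatchingExposing G M₀ {x}) (h : IsMatchingExposing G M U) (hU : G.IsIndepSet U) :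
    U.ncard ≤ 1 := by
  have hle := heq M M₀ (h.isMaxlMatching hU) h₀.1
  have h₀card := ncard_add_ncard_compl {x}
  have hcard := ncard_add_ncard_compl U
  rw [← h₀.2, h₀.1.ncard_mVerts, ncard_singleton] at h₀card
  rw [← h.2, h.1.ncard_mVerts] at hcard
  omega

lemma Equimatchable.adj_of_exposing_triple [Finite V] (heq : Equimatchable G)
    (h₀ : IsMatchingExposing G M₀ {x}) (h : IsMatchingExposing G M {u, v, w}) (huv : u ≠ v) :
    G.Adj u v ∨ G.Adj u w ∨ G.Adj v w := by
  by_contra hno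
  have hind : G.IsIndepSet {u, v, w} := by
    simp only [not_or] at hno
    simp only [IsIndepSet, pairwise_insert, pairwise_singleton]
    grind [G.adj_symm]
  exact huv ((Set.ncard_le_one (toFinite _)).mp (heq.ncard_le_one_of_isIndepSet h₀ h hind)
    u (by simp) v (by simp))

/-- Vertices `v` such that `G - v` has a perfect matching: the set `D(G)` of the Gallai–Edmonds
decomposition of a graph with a near-perfect matching. -/
def exposable (G : SimpleGraph V) : Set V := {v | ∃ M, IsMatchingExposing G M {v}}

/-- `S` is the vertex set of an `M`-alternating path of even length from `x` to `r`, ending with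
an edge of `M`; the path is grown two edges at a time and is kept simple. -/
inductive EvenAltPath (G : SimpleGraph V) (M : Set (Sym2 V)) (x : V) : V → Set V → Prop
  | refl : EvenAltPath G M x x {x}
  | snoc {r y z : V} {S : Set V} : EvenAltPath G M x r S → G.Adj r y → s(y, z) ∈ M → y ∉ S →
      z ∉ S → EvenAltPath G M x z (insert y (insert z S))

def EvenReachable (G : SimpleGraph V) (M : Set (Sym2 V)) (x v : V) : Prop :=
  ∃ S, EvenAltPath G M x v S

def AltReachable (G : SimpleGraph V) (M : Set (Sym2 V)) (x v : V) : Prop :=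
  EvenReachable G M x v ∨ ∃ p, s(v, p) ∈ M ∧ EvenReachable G M x p

namespace EvenAltPath

lemma end_mem (h : EvenAltPath G M x r S) : r ∈ S := by
  cases h <;> simp

lemma exists_flip (hM : IsMatchingExposing G M {x}) (h : EvenAltPath G M x r S) :
    ∃ M', IsMatchingExposing G M' {r} ∧ ∀ e : Sym2 V, (∃ v ∈ e, v ∉ S) → (e ∈ M ↔ e ∈ M') := by
  induction h with
  | refl => exact ⟨M, hM, fun _ _ => Iff.rfl⟩
  | @snoc r y z S h hry hyz hyS hzS ih =>
    obtain ⟨M', hM', hagree⟩ := ih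
    have hyz' : s(y, z) ∈ M' := (hagree _ ⟨y, Sym2.mem_mk_left y z, hyS⟩).mp hyz
    refine ⟨_, hM'.swap hry hyz', fun e ⟨v, hve, hvS⟩ => ?_⟩
    simp only [mem_insert_iff, not_or] at hvS
    obtain ⟨hvy, hvz, hvS⟩ := hvS
    have hry : e ≠ s(r, y) := by
      rintro rfl
      rcases Sym2.mem_iff.mp hve with rfl | rfl
      exacts [hvS h.end_mem, hvy rfl]
    have hyz : e ≠ s(y, z) := by
      rintro rfl
      rcases Sym2.mem_iff.mp hve with rfl | rfl
      exacts [hvy rfl, hvz rfl]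
    simp [hagree e ⟨v, hve, hvS⟩, hry, hyz]

lemma altReachable_of_mem (h : EvenAltPath G M x r S) (hv : v ∈ S) : AltReachable G M x v := by
  induction h with
  | refl =>
    obtain rfl := mem_singleton_iff.mp hv
    exact Or.inl ⟨_, refl⟩
  | @snoc r y z S h hry hyz hyS hzS ih =>
    rcases hv with rfl | rfl | hv
    · exact Or.inr ⟨z, hyz, _, h.snoc hry hyz hyS hzS⟩
    · exact Or.inl ⟨_, h.snoc hry hyz hyS hzS⟩
    · exact ih hv

lemma exists_last_step (hM : IsMatchingExposing G M {x}) {z : V} (h : EvenAltPath G M x z S)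
    (htz : s(t, z) ∈ M) : ∃ r S', EvenAltPath G M x r S' ∧ G.Adj r t ∧ t ∉ S' ∧ z ∉ S' := by
  cases h with
  | refl => exact absurd rfl (hM.notMem_right htz)
  | @snoc r y _ S' h hry hyz hyS hzS =>
    obtain rfl : y = t := hM.1.partner_eq (Sym2.eq_swap ▸ hyz) (Sym2.eq_swap ▸ htz)
    exact ⟨r, S', h, hry, hyS, hzS⟩

end EvenAltPath

lemma EvenReachable.mem_exposable (hM : IsMatchingExposing G M {x})
    (h : EvenReachable G M x r) : r ∈ exposable G :=
  let ⟨_, h⟩ := h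
  let ⟨M', hM', _⟩ := h.exists_flip hM
  ⟨M', hM'⟩

namespace AltReachable

lemma of_mem (hM : IsMatchingExposing G M {x}) (h : AltReachable G M x v) (hvc : s(v, c) ∈ M) :
    AltReachable G M x c := by
  rcases h with hv | ⟨p, hvp, hp⟩
  · exact Or.inr ⟨v, Sym2.eq_swap ▸ hvc, hv⟩
  · exact Or.inl (hM.1.partner_eq hvp hvc ▸ hp)

lemma of_adj_of_evenReachable (hM : IsMatchingExposing G M {x}) (hr : EvenReachable G M x r)
    (hrc : G.Adj r c) : AltReachable G M x c := by
  obtain ⟨S, hS⟩ := hr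
  by_cases hcS : c ∈ S
  · exact hS.altReachable_of_mem hcS
  by_cases hcx : c = x
  · exact Or.inl (hcx ▸ ⟨_, .refl⟩)
  obtain ⟨c', hcc'⟩ := hM.exists_partner hcx
  by_cases hc'S : c' ∈ S
  · exact (hS.altReachable_of_mem hc'S).of_mem hM (Sym2.eq_swap ▸ hcc')
  · exact Or.inr ⟨c', hcc', _, hS.snoc hrc (Sym2.eq_swap ▸ hcc') hcS hc'S⟩

lemma of_adj [Finite V] (heq : Equimatchable G) (hM : IsMatchingExposing G M {x})
    (ht : AltReachable G M x t) (htc : G.Adj t c) : AltReachable G M x c := by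
  by_cases ht' : EvenReachable G M x t
  · exact of_adj_of_evenReachable hM ht' htc
  obtain ⟨p, htp, S, hS⟩ := ht.resolve_left ht'
  -- Flip the path to `r` and trade the matching edges `pt`, `c'c` for `tc`: two of the exposed
  -- vertices `r`, `p`, `c'` are adjacent, and any such edge makes `t` even or `c'` reachable.
  by_contra hc
  obtain ⟨r, S', hS', hrt, htS', hpS'⟩ := hS.exists_last_step hM htp
  have hcx : c ≠ x := fun h => hc (Or.inl (h ▸ ⟨_, .refl⟩))
  obtain ⟨c', hcc'⟩ := hM.exists_partner hcx
  have hc' : ¬ AltReachable G M x c' := fun h => hc (h.of_mem hM (Sym2.eq_swap ▸ hcc'))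
  obtain ⟨M', hM', hagree⟩ := hS'.exists_flip hM
  have hpt : s(p, t) ∈ M' := (hagree _ ⟨p, Sym2.mem_mk_left _ _, hpS'⟩).mp (Sym2.eq_swap ▸ htp)
  have hcS' : c ∉ S' := fun h => hc (hS'.altReachable_of_mem h)
  have hc'c : s(c', c) ∈ M' :=
    (hagree _ ⟨c, Sym2.mem_mk_right _ _, hcS'⟩).mp (Sym2.eq_swap ▸ hcc')
  have hne : s(p, t) ≠ s(c', c) := by
    rw [Ne, Sym2.eq_iff]
    rintro (⟨rfl, -⟩ | ⟨rfl, -⟩)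
    exacts [hc' (Or.inl ⟨S, hS⟩), hc (Or.inl ⟨S, hS⟩)]
  have hrp : r ≠ p := fun h => hpS' (h ▸ hS'.end_mem)
  rcases heq.adj_of_exposing_triple hM (hM'.rewire hpt hc'c hne htc) hrp with hrp | hrc' | hpc'
  · exact ht' ⟨_, hS'.snoc hrp (Sym2.eq_swap ▸ htp) hpS' htS'⟩
  · exact hc' (of_adj_of_evenReachable hM ⟨S', hS'⟩ hrc')
  · exact hc' (of_adj_of_evenReachable hM ⟨S, hS⟩ hpc')

end AltReachable

lemma altReachable_of_connected [Finite V] (hc : G.Connected) (heq : Equimatchable G)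
    (hM : IsMatchingExposing G M {x}) (v : V) : AltReachable G M x v := by
  suffices ∀ {u} (q : G.Walk u v), AltReachable G M x u → AltReachable G M x v from
    this (hc.preconnected x v).some (Or.inl ⟨_, .refl⟩)
  intro u q
  induction q with
  | nil => exact id
  | cons h _ ih => exact fun hu => ih (hu.of_adj heq hM h)

lemma exists_partner_mem_exposable [Finite V] (hc : G.Connected) (heq : Equimatchable G)
    (hM : IsMatchingExposing G M {x}) (hb : b ∉ exposable G) :
    ∃ p, s(b, p) ∈ M ∧ p ∈ exposable G := by
  rcases altReachable_of_connected hc heq hM b with hb' | ⟨p, hbp, hp⟩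
  · exact absurd (hb'.mem_exposable hM) hb
  · exact ⟨p, hbp, hp.mem_exposable hM⟩

lemma not_adj_partner_of_notMem_exposable (hM : IsMatchingExposing G M {x}) (hap : s(a, p) ∈ M)
    (ha : a ∉ exposable G) : ¬ G.Adj x p :=
  fun h => ha ⟨_, hM.swap h (Sym2.eq_swap ▸ hap)⟩

lemma not_adj_of_notMem_exposable [Finite V] (hc : G.Connected) (heq : Equimatchable G)
    (h₀ : IsMatchingExposing G M {x}) {a₁ a₂ : V} (ha₁ : a₁ ∉ exposable G)
    (ha₂ : a₂ ∉ exposable G) : ¬ G.Adj a₁ a₂ := by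
  intro ha
  obtain ⟨p₁, hap₁, hp₁⟩ := exists_partner_mem_exposable hc heq h₀ ha₁
  obtain ⟨p₂, hap₂, hp₂⟩ := exists_partner_mem_exposable hc heq h₀ ha₂
  have hne : s(a₁, p₁) ≠ s(a₂, p₂) := by
    rw [Ne, Sym2.eq_iff]
    rintro (⟨rfl, -⟩ | ⟨rfl, -⟩)
    exacts [ha.ne rfl, ha₁ hp₂]
  by_cases hp : G.Adj p₁ p₂
  · have hx₁ := h₀.notMem_left hap₁
    have hx₂ := h₀.notMem_left hap₂
    have hU : ({x, a₁, a₂} : Set V) \ {a₁, a₂} = {x} := by ext; grind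
    have h' := hU ▸ (h₀.rewire hap₁ hap₂ hne hp).insert_edge (by simp) (by simp) ha
    obtain ⟨q, hq, hqE⟩ := exists_partner_mem_exposable hc heq h' ha₁
    exact ha₂ (h'.1.partner_eq hq (mem_insert _ _) ▸ hqE)
  · have hne' : s(p₁, a₁) ≠ s(p₂, a₂) := by rwa [Sym2.eq_swap, Sym2.eq_swap (a := p₂)]
    have h' := h₀.rewire (Sym2.eq_swap ▸ hap₁) (Sym2.eq_swap ▸ hap₂) hne' ha
    rcases heq.adj_of_exposing_triple h₀ h' (Ne.symm (h₀.notMem_right hap₁)) with h | h | h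
    · exact not_adj_partner_of_notMem_exposable h₀ hap₁ ha₁ h
    · exact not_adj_partner_of_notMem_exposable h₀ hap₂ ha₂ h
    · exact hp h

def HasIndepTriple (G : SimpleGraph V) (S : Set V) : Prop :=
  ∃ T ⊆ S, T.ncard = 3 ∧ G.IsIndepSet T

lemma HasIndepTriple.of_mem (hu : u ∈ S) (hv : v ∈ S) (hw : w ∈ S) (huv : u ≠ v) (huw : u ≠ w)
    (hvw : v ≠ w) (h₁ : ¬ G.Adj u v) (h₂ : ¬ G.Adj u w) (h₃ : ¬ G.Adj v w) :
    HasIndepTriple G S := by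
  refine ⟨{u, v, w}, by simp [insert_subset_iff, hu, hv, hw],
    ncard_eq_three.mpr ⟨u, v, w, huv, huw, hvw, rfl⟩, ?_⟩
  simp only [IsIndepSet, pairwise_insert, pairwise_singleton]
  grind [G.adj_symm]

lemma hasIndepTriple_of_ne_of_notMem_exposable [Finite V] (hc : G.Connected)
    (heq : Equimatchable G) (h₀ : IsMatchingExposing G M {x}) {a₁ a₂ : V}
    (ha₁ : a₁ ∉ exposable G) (ha₂ : a₂ ∉ exposable G) (ha : a₁ ≠ a₂) :
    HasIndepTriple G (exposable G) := by
  obtain ⟨p₁, hap₁, hp₁⟩ := exists_partner_mem_exposable hc heq h₀ ha₁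
  obtain ⟨p₂, hap₂, hp₂⟩ := exists_partner_mem_exposable hc heq h₀ ha₂
  have hne : s(a₁, p₁) ≠ s(a₂, p₂) := by
    rw [Ne, Sym2.eq_iff]
    rintro (⟨rfl, -⟩ | ⟨rfl, -⟩)
    exacts [ha rfl, ha₁ hp₂]
  have hp : p₁ ≠ p₂ := by
    rintro rfl
    exact ha (h₀.1.partner_eq (Sym2.eq_swap ▸ hap₁) (Sym2.eq_swap ▸ hap₂))
  have hx₁ : a₁ ≠ x := h₀.notMem_left hap₁
  have hx₂ : a₂ ≠ x := h₀.notMem_left hap₂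
  have hpp : ¬ G.Adj p₁ p₂ := by
    intro hpp
    have h' := h₀.rewire hap₁ hap₂ hne hpp
    rcases heq.adj_of_exposing_triple h₀ h' hx₁.symm with h | h | h
    · have hU : ({x, a₁, a₂} : Set V) \ {x, a₁} = {a₂} := by ext; grind
      exact ha₂ ⟨_, hU ▸ h'.insert_edge (by simp) (by simp) h⟩
    · have hU : ({x, a₁, a₂} : Set V) \ {x, a₂} = {a₁} := by ext; grind
      exact ha₁ ⟨_, hU ▸ h'.insert_edge (by simp) (by simp) h⟩
    · exact not_adj_of_notMem_exposable hc heq h₀ ha₁ ha₂ h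
  exact .of_mem ⟨M, h₀⟩ hp₁ hp₂ (Ne.symm (h₀.notMem_right hap₁))
    (Ne.symm (h₀.notMem_right hap₂)) hp (not_adj_partner_of_notMem_exposable h₀ hap₁ ha₁)
    (not_adj_partner_of_notMem_exposable h₀ hap₂ ha₂) hpp

lemma hasIndepTriple_of_unique_notMem_exposable [Finite V] (hc : G.Connected)
    (heq : Equimatchable G) (ha : a ∉ exposable G) (huniq : ∀ b ∉ exposable G, b = a)
    (hd : d ∈ exposable G) (hd' : d' ∈ exposable G) (hdd' : d ≠ d') (h₁ : ¬ G.Adj d d')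
    (h₂ : ¬ G.Adj d a) (h₃ : ¬ G.Adj d' a) : HasIndepTriple G (exposable G) := by
  obtain ⟨M, hM⟩ := hd
  obtain ⟨p, hap, hp⟩ := exists_partner_mem_exposable hc heq hM ha
  have hpd : p ≠ d := hM.notMem_right hap
  have hpd' : p ≠ d' := by
    rintro rfl
    exact h₃ (hM.1.adj hap).symm
  have hdp := not_adj_partner_of_notMem_exposable hM hap ha
  by_cases hpd'' : ¬ G.Adj p d'
  · exact .of_mem ⟨M, hM⟩ hd' hp hdd' hpd.symm hpd'.symm h₁ hdp (fun h => hpd'' h.symm)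
  rw [not_not] at hpd''
  obtain ⟨w, hd'w⟩ := hM.exists_partner (Ne.symm hdd')
  have hwa : w ≠ a := by
    rintro rfl
    exact hpd' (hM.1.partner_eq hap (Sym2.eq_swap ▸ hd'w))
  have hw : w ∈ exposable G := by
    by_contra hw
    exact hwa (huniq w hw)
  have hwd : w ≠ d := hM.notMem_right hd'w
  have hwp : w ≠ p := by
    rintro rfl
    exact ha (hM.1.partner_eq (Sym2.eq_swap ▸ hap) (Sym2.eq_swap ▸ hd'w) ▸ hd')
  have hne : s(a, p) ≠ s(d', w) := by
    rw [Ne, Sym2.eq_iff]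
    rintro (⟨rfl, -⟩ | ⟨rfl, -⟩)
    exacts [ha hd', hwa rfl]
  have hdw : ¬ G.Adj d w := by
    intro hdw
    have hM' := hM.swap hdw (Sym2.eq_swap ▸ hd'w)
    have hap' : s(a, p) ∈ insert s(d, w) (M \ {s(w, d')}) :=
      mem_insert_of_mem _ ⟨hap, by rwa [Sym2.eq_swap (a := w)]⟩
    exact not_adj_partner_of_notMem_exposable hM' hap' ha hpd''.symm
  by_cases hpw : G.Adj p w
  · exfalso
    rcases heq.adj_of_exposing_triple hM (hM.rewire hap hd'w hne hpw)
      (Ne.symm (hM.notMem_left hap)) with h | h | h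
    exacts [h₂ h, h₁ h, h₃ h.symm]
  · exact .of_mem ⟨M, hM⟩ hp hw hpd.symm hwd.symm hwp.symm hdp hdw hpw

lemma HasIndepTriple.to_exposable [Finite V] (hc : G.Connected) (heq : Equimatchable G)
    (h₀ : IsMatchingExposing G M {x}) (hT : HasIndepTriple G univ) :
    HasIndepTriple G (exposable G) := by
  by_cases h₂ : ∃ a₁ a₂, a₁ ∉ exposable G ∧ a₂ ∉ exposable G ∧ a₁ ≠ a₂
  · obtain ⟨a₁, a₂, ha₁, ha₂, ha⟩ := h₂
    exact hasIndepTriple_of_ne_of_notMem_exposable hc heq h₀ ha₁ ha₂ ha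
  push Not at h₂
  obtain ⟨T, -, hT3, hT⟩ := hT
  by_cases hTE : T ⊆ exposable G
  · exact ⟨T, hTE, hT3, hT⟩
  obtain ⟨a, haT, ha⟩ := not_subset.mp hTE
  obtain ⟨d, d', hdd', hT'⟩ : ∃ d d', d ≠ d' ∧ T \ {a} = {d, d'} := by
    rw [← ncard_eq_two, ncard_sdiff_singleton_of_mem haT, hT3]
  have hd : d ∈ T \ {a} := by simp [hT']
  have hd' : d' ∈ T \ {a} := by simp [hT']
  have hmem : ∀ b ∈ T \ {a}, b ∈ exposable G := fun b hb => by
    by_contra h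
    exact hb.2 (h₂ b a h ha)
  exact hasIndepTriple_of_unique_notMem_exposable hc heq ha (fun b hb => h₂ b a hb ha)
    (hmem d hd) (hmem d' hd') hdd' (hT hd.1 hd'.1 hdd') (hT hd.1 haT hd.2)
    (hT hd'.1 haT hd'.2)

lemma exists_isPerfectMatchingSet_delVerts (hv : v ∈ exposable G) :
    ∃ M, IsPerfectMatchingSet (delVerts G {v}) M := by
  obtain ⟨M, hM⟩ := hv
  refine ⟨{e | e.map Subtype.val ∈ M}, ⟨fun e he => ?_, fun e he f hf hne u hu => ?_⟩, fun u => ?_⟩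
  · induction e using Sym2.ind
    exact hM.1.adj he
  · exact hM.1.2 _ he _ hf (fun h => hne (Sym2.map.injective Subtype.val_injective h)) u
      ⟨Sym2.mem_map.mpr ⟨u, hu.1, rfl⟩, Sym2.mem_map.mpr ⟨u, hu.2, rfl⟩⟩
  · obtain ⟨w, hw⟩ := hM.exists_partner u.2
    exact ⟨s(u, ⟨w, hM.notMem_right hw⟩), by simpa using hw, Sym2.mem_mk_left _ _⟩

lemma hasIndepTriple_univ_of_two_lt_indepNum [Finite V] (h : 2 < _root_.indepNum G) :
    HasIndepTriple G univ := by
  let sizes := {n | ∃ S : Set V, G.IsIndepSet S ∧ S.ncard = n}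
  have hbdd : BddAbove sizes := ⟨Nat.card V, by rintro _ ⟨S, -, rfl⟩; exact ncard_le_card S⟩
  obtain ⟨S, hS, hcard⟩ : sSup sizes ∈ sizes := Nat.sSup_mem ⟨0, ∅, by simp, by simp⟩ hbdd
  obtain ⟨T, hTS, hT⟩ := exists_subset_card_eq (s := S) (n := 3) (by rw [hcard]; exact h)
  exact ⟨T, subset_univ T, hT, hS.mono hTS⟩

end

theorem stmt16_general [Fintype V] (G : SimpleGraph V)
    (hc : G.Connected)
    (heq : Equimatchable G) (hnp : ∃ M, IsNearPerfectMatchingSet G M)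
    (hα : 2 < _root_.indepNum G) :
    ∃ S : Set V, S.ncard = 3 ∧ (S.Pairwise fun u v => ¬ G.Adj u v) ∧
      ∀ v ∈ S, ∃ M, IsPerfectMatchingSet (delVerts G {v}) M := by
  obtain ⟨M, hM, x, hx⟩ := hnp
  obtain ⟨S, hSE, hS3, hS⟩ :=
    (hasIndepTriple_univ_of_two_lt_indepNum hα).to_exposable hc heq ⟨hM, hx⟩
  exact ⟨S, hS3, hS, fun v hv => exists_isPerfectMatchingSet_delVerts (hSE hv)⟩

theorem stmt16 [Fintype V] (G : SimpleGraph V)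
    (hodd : Odd (Fintype.card V)) (hc : G.Connected)
    (heq : Equimatchable G) (hnp : ∃ M, IsNearPerfectMatchingSet G M)
    (hα : 2 < _root_.indepNum G) :
    ∃ S : Set V, S.ncard = 3 ∧ (S.Pairwise fun u v => ¬ G.Adj u v) ∧
      ∀ v ∈ S, ∃ M, IsPerfectMatchingSet (delVerts G {v}) M :=
  stmt16_general G hc heq hnp hα
end

section
/- Let G be a graph such that G ⊠ H has a perfect matching for some graph H where both G and H are nontrivial and connected; if G ⊠ H is well-edge-dominated then G ⊠ H is K_4, i.e., both G and H are K_2. (Connected well-edge-dominated graphs with a perfect matching are K_4 or balanced complete bipartite, and strong products of nontrivial connected graphs contain triangles and at least 6 vertices unless both factors are K_2.) -/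
open SimpleGraph

variable {V : Type*} {W : Type*}

/-!
If `M` is a perfect matching of a well-edge-dominated graph and `pq`, `rs` are edges of `M` with
`q ~ r`, then `p ~ s`: otherwise replacing `pq`, `rs` by `qr` leaves only `p` and `s` uncovered,
which gives an edge dominating set smaller than the minimal one `M`. Hence one may swap `pq`, `rs`
for `qr`, `ps`, and two such swaps put any two disjoint edges into a common perfect matching. So
every path `a b c d` on four vertices closes up: `a ~ d`.

In `G ⊠ H` with `G` not complete, an induced path `x a b` of `G` and an edge `y y'` of `H` give the
path `(x,y') (x,y) (a,y) (b,y)` with non-adjacent ends. So both factors are complete and so is the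
product. A complete graph on `n ≥ 5` vertices is not well-edge-dominated, since the star at `v`
missing one edge `vw` is a minimal edge dominating set with `n - 2 > n / 2` edges. Hence `n = 4`.
-/

section Matching

variable {Γ : SimpleGraph V} {M F : Set (Sym2 V)} {e f : Sym2 V} {v : V}

theorem mem_mVerts_insert_s17 : v ∈ mVerts (insert e M) ↔ v ∈ e ∨ v ∈ mVerts M := by
  simp [mVerts]

theorem IsMatchingSet.eq_of_mem (hM : IsMatchingSet Γ M) (he : e ∈ M) (hf : f ∈ M)
    (hve : v ∈ e) (hvf : v ∈ f) : e = f := by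
  by_contra h
  exact hM.2 e he f hf h v ⟨hve, hvf⟩

theorem IsMatchingSet.mono_s17 {M' : Set (Sym2 V)} (hM : IsMatchingSet Γ M) (h : M' ⊆ M) :
    IsMatchingSet Γ M' :=
  ⟨h.trans hM.1, fun e he f hf => hM.2 e (h he) f (h hf)⟩

theorem IsMatchingSet.insert (hM : IsMatchingSet Γ M) (he : e ∈ Γ.edgeSet)
    (hdisj : ∀ v ∈ e, v ∉ mVerts M) : IsMatchingSet Γ (insert e M) := by
  refine ⟨Set.insert_subset he hM.1, ?_⟩
  rintro f (rfl | hf) g (rfl | hg) hfg v ⟨hvf, hvg⟩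
  · exact hfg rfl
  · exact hdisj v hvf ⟨g, hg, hvg⟩
  · exact hdisj v hvg ⟨f, hf, hvf⟩
  · exact hM.2 f hf g hg hfg v ⟨hvf, hvg⟩

theorem IsMatchingSet.notMem_mVerts_sdiff {S : Set (Sym2 V)} (hM : IsMatchingSet Γ M)
    (he : e ∈ M) (heS : e ∈ S) (hv : v ∈ e) : v ∉ mVerts (M \ S) := by
  rintro ⟨f, ⟨hfM, hfS⟩, hvf⟩
  exact hfS (hM.eq_of_mem he hfM hv hvf ▸ heS)

theorem IsMatchingSet.two_mul_ncard_le_card [Fintype V] (hM : IsMatchingSet Γ M) :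
    2 * M.ncard ≤ Fintype.card V := by
  classical
  have hdisj : (M.toFinset : Set (Sym2 V)).PairwiseDisjoint Sym2.toFinset := by
    intro e he f hf hef
    rw [Function.onFun, Finset.disjoint_left]
    intro v hve hvf
    simp only [Set.coe_toFinset, Sym2.mem_toFinset] at he hf hve hvf
    exact hef (hM.eq_of_mem he hf hve hvf)
  have hcard : ∀ e ∈ M.toFinset, e.toFinset.card = 2 := fun e he =>
    Sym2.card_toFinset_of_not_isDiag e
      (Γ.not_isDiag_of_mem_edgeSet (hM.1 (Set.mem_toFinset.1 he)))
  calc 2 * M.ncard = (M.toFinset.biUnion Sym2.toFinset).card := by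
        rw [Finset.card_biUnion hdisj, Finset.sum_congr rfl hcard, Finset.sum_const,
          smul_eq_mul, mul_comm, Set.ncard_eq_toFinset_card']
    _ ≤ Fintype.card V := Finset.card_le_univ _

theorem IsPerfectMatchingSet.exists_mk_mem (hM : IsPerfectMatchingSet Γ M) (v : V) :
    ∃ w, s(w, v) ∈ M := by
  obtain ⟨e, he, hve⟩ := hM.2 v
  obtain ⟨w, rfl⟩ := Sym2.mem_iff_exists.1 hve
  exact ⟨w, Sym2.eq_swap ▸ he⟩

theorem IsPerfectMatchingSet.isEDS (hM : IsPerfectMatchingSet Γ M) : IsEDS Γ M := by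
  refine ⟨hM.1.1, fun e _ _ => ?_⟩
  induction e using Sym2.ind with | h v w => ?_
  obtain ⟨f, hf, hvf⟩ := hM.2 v
  exact ⟨f, hf, v, Sym2.mem_mk_left v w, hvf⟩

theorem IsPerfectMatchingSet.isMinlEDS (hM : IsPerfectMatchingSet Γ M) : IsMinlEDS Γ M := by
  refine ⟨hM.isEDS, fun F hFM hF => ?_⟩
  obtain ⟨e, heM, heF⟩ := Set.exists_of_ssubset hFM
  obtain ⟨f, hf, v, hve, hvf⟩ := hF.2 e (hM.1.1 heM) heF
  exact heF (hM.1.eq_of_mem heM (hFM.1 hf) hve hvf ▸ hf)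

theorem isEDS_of_forall_exists_mem_mVerts (hF : F ⊆ Γ.edgeSet)
    (h : ∀ e ∈ Γ.edgeSet, ∃ v ∈ e, v ∈ mVerts F) : IsEDS Γ F := by
  refine ⟨hF, fun e he _ => ?_⟩
  obtain ⟨v, hve, f, hf, hvf⟩ := h e he
  exact ⟨f, hf, v, hve, hvf⟩

section Swap

variable {p q r s : V}

theorem IsPerfectMatchingSet.swap (hM : IsPerfectMatchingSet Γ M) (h₁ : s(p, q) ∈ M)
    (h₂ : s(r, s) ∈ M) (hne : s(p, q) ≠ s(r, s)) (hqr : Γ.Adj q r) (hps : Γ.Adj p s) :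
    IsPerfectMatchingSet Γ (insert s(q, r) (insert s(p, s) (M \ {s(p, q), s(r, s)}))) := by
  have hdisj : ∀ {v}, v ∈ s(p, q) → v ∉ s(r, s) := fun hv hv' =>
    hne (hM.1.eq_of_mem h₁ h₂ hv hv')
  have hD : ∀ {v}, v = p ∨ v = q ∨ v = r ∨ v = s → v ∉ mVerts (M \ {s(p, q), s(r, s)}) := by
    rintro v (rfl | rfl | rfl | rfl)
    · exact hM.1.notMem_mVerts_sdiff h₁ (by simp) (Sym2.mem_mk_left _ _)
    · exact hM.1.notMem_mVerts_sdiff h₁ (by simp) (Sym2.mem_mk_right _ _)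
    · exact hM.1.notMem_mVerts_sdiff h₂ (by simp) (Sym2.mem_mk_left _ _)
    · exact hM.1.notMem_mVerts_sdiff h₂ (by simp) (Sym2.mem_mk_right _ _)
  have hqp : q ≠ p := (Γ.mem_edgeSet.1 (hM.1.1 h₁)).ne.symm
  have hqs : q ≠ s := fun h => hdisj (Sym2.mem_mk_right p q) (h ▸ Sym2.mem_mk_right r s)
  have hrp : r ≠ p := fun h => hdisj (Sym2.mem_mk_left p q) (h ▸ Sym2.mem_mk_left r s)
  have hrs : r ≠ s := (Γ.mem_edgeSet.1 (hM.1.1 h₂)).ne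
  refine ⟨((hM.1.mono_s17 Set.sdiff_subset).insert (Γ.mem_edgeSet.2 hps) ?_).insert
    (Γ.mem_edgeSet.2 hqr) ?_, fun v => ?_⟩
  · intro v hv
    rcases Sym2.mem_iff.1 hv with rfl | rfl <;> exact hD (by simp)
  · intro v hv
    rw [mem_mVerts_insert_s17, not_or]
    rcases Sym2.mem_iff.1 hv with rfl | rfl
    · exact ⟨by simp [hqp, hqs], hD (by simp)⟩
    · exact ⟨by simp [hrp, hrs], hD (by simp)⟩
  · obtain ⟨e, he, hve⟩ := hM.2 v
    by_cases heD : e ∈ ({s(p, q), s(r, s)} : Set (Sym2 V))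
    · rcases heD with rfl | rfl <;> rcases Sym2.mem_iff.1 hve with rfl | rfl <;>
        simp [mem_mVerts_insert_s17]
    · exact mem_mVerts_insert_s17.2 (Or.inr (mem_mVerts_insert_s17.2 (Or.inr ⟨e, ⟨he, heD⟩, hve⟩)))

theorem WellEdgeDominated.adj_of_mem_of_mem [Finite V] (hwed : WellEdgeDominated Γ)
    (hM : IsPerfectMatchingSet Γ M) (h₁ : s(p, q) ∈ M) (h₂ : s(r, s) ∈ M)
    (hne : s(p, q) ≠ s(r, s)) (hqr : Γ.Adj q r) : Γ.Adj p s := by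
  by_contra hps
  set D := M \ {s(p, q), s(r, s)}
  have hcover : ∀ v, v ≠ p → v ≠ s → v ∈ mVerts (insert s(q, r) D) := by
    intro v hvp hvs
    obtain ⟨e, he, hve⟩ := hM.2 v
    by_cases heD : e ∈ ({s(p, q), s(r, s)} : Set (Sym2 V))
    · rcases heD with rfl | rfl <;> rcases Sym2.mem_iff.1 hve with rfl | rfl <;>
        simp_all [mem_mVerts_insert_s17]
    · exact mem_mVerts_insert_s17.2 (Or.inr ⟨e, ⟨he, heD⟩, hve⟩)
  have hEDS : IsEDS Γ (insert s(q, r) D) := by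
    refine isEDS_of_forall_exists_mem_mVerts
      (Set.insert_subset (Γ.mem_edgeSet.2 hqr) (Set.sdiff_subset.trans hM.1.1)) fun e he => ?_
    induction e using Sym2.ind with | h u w => ?_
    have huw : Γ.Adj u w := he
    by_cases hu : u ≠ p ∧ u ≠ s
    · exact ⟨u, Sym2.mem_mk_left u w, hcover u hu.1 hu.2⟩
    by_cases hw : w ≠ p ∧ w ≠ s
    · exact ⟨w, Sym2.mem_mk_right u w, hcover w hw.1 hw.2⟩
    have hu : u = p ∨ u = s := by tauto
    have hw : w = p ∨ w = s := by tauto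
    exfalso
    rcases hu with rfl | rfl <;> rcases hw with rfl | rfl
    exacts [huw.ne rfl, hps huw, hps huw.symm, huw.ne rfl]
  have hcard : (insert s(q, r) D).ncard < M.ncard := by
    have hD : D.ncard + 2 = M.ncard := by
      rw [← Set.ncard_pair hne]
      exact Set.ncard_sdiff_add_ncard_of_subset
        (Set.insert_subset h₁ (Set.singleton_subset_iff.2 h₂))
    have := Set.ncard_insert_le s(q, r) D
    omega
  exact hcard.not_ge (hwed M _ hM.isMinlEDS hEDS)

theorem WellEdgeDominated.exists_isPerfectMatchingSet_mem [Finite V] (hwed : WellEdgeDominated Γ)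
    (hM : IsPerfectMatchingSet Γ M) (hqr : Γ.Adj q r) :
    ∃ M', IsPerfectMatchingSet Γ M' ∧ s(q, r) ∈ M' ∧ ∀ e ∈ M, q ∉ e → r ∉ e → e ∈ M' := by
  by_cases hqrM : s(q, r) ∈ M
  · exact ⟨M, hM, hqrM, fun e he _ _ => he⟩
  obtain ⟨p, hp⟩ := hM.exists_mk_mem q
  obtain ⟨s, hs⟩ := hM.exists_mk_mem r
  rw [Sym2.eq_swap] at hs
  have hne : s(p, q) ≠ s(r, s) := fun h =>
    hqrM ((Sym2.mem_and_mem_iff hqr.ne).1 ⟨Sym2.mem_mk_right p q,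
      h ▸ Sym2.mem_mk_left r s⟩ ▸ hp)
  refine ⟨_, hM.swap hp hs hne hqr (hwed.adj_of_mem_of_mem hM hp hs hne hqr),
    Set.mem_insert _ _, fun e he hqe hre => ?_⟩
  refine Set.mem_insert_of_mem _ (Set.mem_insert_of_mem _ ⟨he, ?_⟩)
  rintro (rfl | rfl)
  · exact hqe (Sym2.mem_mk_right p q)
  · exact hre (Sym2.mem_mk_left r s)

end Swap

theorem WellEdgeDominated.adj_of_adj_of_adj_of_adj [Finite V] (hwed : WellEdgeDominated Γ)
    (hM : IsPerfectMatchingSet Γ M) {a b c d : V} (hab : Γ.Adj a b) (hbc : Γ.Adj b c)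
    (hcd : Γ.Adj c d) (hac : a ≠ c) (had : a ≠ d) (hbd : b ≠ d) : Γ.Adj a d := by
  obtain ⟨M₁, hM₁, hcd₁, -⟩ := hwed.exists_isPerfectMatchingSet_mem hM hcd
  obtain ⟨M₂, hM₂, hab₂, hcd₂⟩ := hwed.exists_isPerfectMatchingSet_mem hM₁ hab
  have ha : a ∉ s(c, d) := by simp [hac, had]
  refine hwed.adj_of_mem_of_mem hM₂ hab₂ (hcd₂ _ hcd₁ ha (by simp [hbc.ne, hbd])) ?_ hbc
  exact fun h => ha (h ▸ Sym2.mem_mk_left a b)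

end Matching

theorem isMinlEDS_top_image {v w : V} (hvw : v ≠ w) (hne : ({v, w}ᶜ : Set V).Nonempty) :
    IsMinlEDS ⊤ ((fun u => s(v, u)) '' {v, w}ᶜ) := by
  have hmem : ∀ {e}, e ∈ (fun u => s(v, u)) '' {v, w}ᶜ ↔ ∃ u, u ≠ v ∧ u ≠ w ∧ s(v, u) = e := by
    simp [not_or, and_assoc]
  have hcover : ∀ x, x ≠ w → x ∈ mVerts ((fun u => s(v, u)) '' {v, w}ᶜ) := by
    intro x hxw
    by_cases hxv : x = v
    · obtain ⟨u, hu⟩ := hne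
      exact ⟨_, ⟨u, hu, rfl⟩, hxv ▸ Sym2.mem_mk_left v u⟩
    · exact ⟨_, hmem.2 ⟨x, hxv, hxw, rfl⟩, Sym2.mem_mk_right v x⟩
  refine ⟨isEDS_of_forall_exists_mem_mVerts ?_ fun e he => ?_, fun F hF hEDS => ?_⟩
  · rintro _ ⟨u, hu, rfl⟩
    exact (top_adj v u).2 fun h => hu (Or.inl h.symm)
  · induction e using Sym2.ind with | h a b => ?_
    by_cases haw : a = w
    · have hab : a ≠ b := ((⊤ : SimpleGraph V).mem_edgeSet.1 he).ne
      exact ⟨b, Sym2.mem_mk_right a b, hcover b fun h => hab (haw.trans h.symm)⟩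
    · exact ⟨a, Sym2.mem_mk_left a b, hcover a haw⟩
  · obtain ⟨_, hgF, hgF'⟩ := Set.exists_of_ssubset hF
    obtain ⟨u, huv, huw, rfl⟩ := hmem.1 hgF
    have huwF : s(u, w) ∉ F := fun h => by
      obtain ⟨u', -, -, h'⟩ := hmem.1 (hF.1 h)
      have : v ∈ s(u, w) := h' ▸ Sym2.mem_mk_left v u'
      simp [huv.symm, hvw] at this
    obtain ⟨f, hf, x, hxe, hxf⟩ := hEDS.2 _ ((top_adj u w).2 huw) huwF
    obtain ⟨u', -, hu'w, rfl⟩ := hmem.1 (hF.1 hf)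
    rcases Sym2.mem_iff.1 hxe with rfl | rfl <;> rcases Sym2.mem_iff.1 hxf with h | h
    · exact huv h
    · exact hgF' (h ▸ hf)
    · exact hvw h.symm
    · exact hu'w h.symm

theorem not_wellEdgeDominated_top [Fintype V] (hV : 5 ≤ Fintype.card V)
    {M : Set (Sym2 V)} (hM : IsPerfectMatchingSet ⊤ M) :
    ¬ WellEdgeDominated (⊤ : SimpleGraph V) := by
  intro hwed
  obtain ⟨v, w, hvw⟩ := Fintype.exists_pair_of_one_lt_card (α := V) (by omega)
  have hcompl : ({v, w}ᶜ : Set V).ncard = Fintype.card V - 2 := by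
    rw [Set.ncard_compl, Set.ncard_pair hvw, Nat.card_eq_fintype_card]
  have hcard : ((fun u => s(v, u)) '' ({v, w}ᶜ : Set V)).ncard = Fintype.card V - 2 := by
    rw [Set.ncard_image_of_injective _ fun _ _ h => Sym2.congr_right.1 h, hcompl]
  have hstar := isMinlEDS_top_image hvw (Set.nonempty_of_ncard_ne_zero (by omega))
  have := hwed _ M hstar hM.isEDS
  have := hM.1.two_mul_ncard_le_card
  omega

section StrongProduct

variable {G : SimpleGraph V} {H : SimpleGraph W} {M : Set (Sym2 (V × W))}

theorem strongProd_adj {x y : V × W} :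
    (strongProd G H).Adj x y ↔
      x ≠ y ∧ (x.1 = y.1 ∨ G.Adj x.1 y.1) ∧ (x.2 = y.2 ∨ H.Adj x.2 y.2) :=
  Iff.rfl

theorem strongProd_top : strongProd (⊤ : SimpleGraph V) (⊤ : SimpleGraph W) = ⊤ := by
  ext x y
  simp [strongProd_adj, em]

theorem SimpleGraph.Connected.exists_adj_adj_not_adj (hG : G.Connected) (hne : G ≠ ⊤) :
    ∃ x a b, G.Adj x a ∧ G.Adj a b ∧ ¬ G.Adj x b ∧ x ≠ b := by
  obtain ⟨u, w, huw, hadj⟩ : ∃ u w, u ≠ w ∧ ¬ G.Adj u w := by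
    simpa [eq_top_iff_forall_ne_adj] using hne
  obtain ⟨p, hp⟩ := hG.exists_walk_length_eq_dist u w
  exact p.exists_adj_adj_not_adj_ne hp (hG.one_lt_dist_of_ne_of_not_adj huw hadj)

theorem eq_top_of_wellEdgeDominated_strongProd_left [Finite V] [Finite W] (hG : G.Connected)
    {y y' : W} (hy : H.Adj y y') (hM : IsPerfectMatchingSet (strongProd G H) M)
    (hwed : WellEdgeDominated (strongProd G H)) : G = ⊤ := by
  by_contra hne
  obtain ⟨x, a, b, hxa, hab, hxb, hxb'⟩ := hG.exists_adj_adj_not_adj hne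
  have := hwed.adj_of_adj_of_adj_of_adj hM (a := (x, y')) (b := (x, y)) (c := (a, y))
    (d := (b, y))
    (strongProd_adj.2 ⟨by simp [hy.ne'], Or.inl rfl, Or.inr hy.symm⟩)
    (strongProd_adj.2 ⟨by simp [hxa.ne], Or.inr hxa, Or.inl rfl⟩)
    (strongProd_adj.2 ⟨by simp [hab.ne], Or.inr hab, Or.inl rfl⟩)
    (by simp [hxa.ne]) (by simp [hxb']) (by simp [hxb'])
  exact (strongProd_adj.1 this).2.1.elim hxb' hxb

theorem eq_top_of_wellEdgeDominated_strongProd_right [Finite V] [Finite W] (hH : H.Connected)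
    {y y' : V} (hy : G.Adj y y') (hM : IsPerfectMatchingSet (strongProd G H) M)
    (hwed : WellEdgeDominated (strongProd G H)) : H = ⊤ := by
  by_contra hne
  obtain ⟨x, a, b, hxa, hab, hxb, hxb'⟩ := hH.exists_adj_adj_not_adj hne
  have := hwed.adj_of_adj_of_adj_of_adj hM (a := (y', x)) (b := (y, x)) (c := (y, a))
    (d := (y, b))
    (strongProd_adj.2 ⟨by simp [hy.ne'], Or.inr hy.symm, Or.inl rfl⟩)
    (strongProd_adj.2 ⟨by simp [hxa.ne], Or.inl rfl, Or.inr hxa⟩)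
    (strongProd_adj.2 ⟨by simp [hab.ne], Or.inl rfl, Or.inr hab⟩)
    (by simp [hxa.ne]) (by simp [hxb']) (by simp [hxb'])
  exact (strongProd_adj.1 this).2.2.elim hxb' hxb

end StrongProduct

theorem stmt17 [Fintype V] [Fintype W] (G : SimpleGraph V) (H : SimpleGraph W)
    (hGn : 2 ≤ Fintype.card V) (hHn : 2 ≤ Fintype.card W)
    (hGc : G.Connected) (hHc : H.Connected)
    (hpm : ∃ M, IsPerfectMatchingSet (strongProd G H) M)
    (hwed : WellEdgeDominated (strongProd G H)) :
    Nonempty (G ≃g (⊤ : SimpleGraph (Fin 2))) ∧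
    Nonempty (H ≃g (⊤ : SimpleGraph (Fin 2))) := by
  obtain ⟨M, hM⟩ := hpm
  have : Nontrivial V := Fintype.one_lt_card_iff_nontrivial.1 hGn
  have : Nontrivial W := Fintype.one_lt_card_iff_nontrivial.1 hHn
  obtain ⟨a, ha⟩ := hGc.preconnected.exists_adj_of_nontrivial hGc.nonempty.some
  obtain ⟨d, hd⟩ := hHc.preconnected.exists_adj_of_nontrivial hHc.nonempty.some
  obtain rfl := eq_top_of_wellEdgeDominated_strongProd_left hGc hd hM hwed
  obtain rfl := eq_top_of_wellEdgeDominated_strongProd_right hHc ha hM hwed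
  rw [strongProd_top] at hM hwed
  have hcard : Fintype.card V * Fintype.card W ≤ 4 := by
    by_contra h
    exact not_wellEdgeDominated_top (by rw [Fintype.card_prod]; omega) hM hwed
  have hV : Fintype.card V = 2 := by nlinarith
  have hW : Fintype.card W = 2 := by nlinarith
  exact ⟨⟨Iso.completeGraph (Fintype.equivFinOfCardEq hV)⟩,
    ⟨Iso.completeGraph (Fintype.equivFinOfCardEq hW)⟩⟩
end

section
/- The strong product C_4 ⊠ C_4 is not well-dominated: its domination number is 3 while it has a minimal dominating set of size 4 (a maximum independent set). -/
open SimpleGraph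

variable {V : Type*} {W : Type*}

/-!
Any two closed neighbourhoods of `C₄ ⊠ C₄` miss some vertex, so `γ ≥ 3`, and the diagonal
`{(0,0), (1,1), (2,2)}` dominates. The square `{0,2} × {0,2}` is a product of independent
dominating sets of `C₄`; such products stay independent and dominating in a strong product, and an
independent dominating set is minimal dominating. This gives a minimal dominating set of size 4.
-/

instance {V W : Type*} [DecidableEq V] [DecidableEq W] (G : SimpleGraph V) (H : SimpleGraph W)
    [DecidableRel G.Adj] [DecidableRel H.Adj] : DecidableRel (strongProd G H).Adj :=
  fun x y => inferInstanceAs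
    (Decidable (x ≠ y ∧ (x.1 = y.1 ∨ G.Adj x.1 y.1) ∧ (x.2 = y.2 ∨ H.Adj x.2 y.2)))

namespace IsDomSet

variable {G : SimpleGraph V} {D : Set V}

theorem exists_eq_or_adj (hD : IsDomSet G D) (v : V) : ∃ u ∈ D, u = v ∨ G.Adj u v := by
  by_cases hv : v ∈ D
  · exact ⟨v, hv, .inl rfl⟩
  · obtain ⟨u, hu, hadj⟩ := hD v hv
    exact ⟨u, hu, .inr hadj⟩

theorem prod {H : SimpleGraph W} {A : Set V} {B : Set W} (hA : IsDomSet G A) (hB : IsDomSet H B) :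
    IsDomSet (strongProd G H) (A ×ˢ B) := by
  rintro ⟨x, y⟩ hxy
  obtain ⟨a, ha, hax⟩ := hA.exists_eq_or_adj x
  obtain ⟨b, hb, hby⟩ := hB.exists_eq_or_adj y
  exact ⟨(a, b), ⟨ha, hb⟩, fun h => hxy (h ▸ ⟨ha, hb⟩), hax, hby⟩

theorem isMinlDomSet_of_isIndepSet (hD : IsDomSet G D) (hI : G.IsIndepSet D) :
    IsMinlDomSet G D := by
  refine ⟨hD, fun D' hD'D hD' => ?_⟩
  obtain ⟨x, hxD, hxD'⟩ := Set.exists_of_ssubset hD'D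
  obtain ⟨u, huD', hux⟩ := hD' x hxD'
  exact hI (hD'D.subset huD') hxD hux.ne hux

end IsDomSet

theorem SimpleGraph.IsIndepSet.strongProd {G : SimpleGraph V} {H : SimpleGraph W} {A : Set V}
    {B : Set W} (hA : G.IsIndepSet A) (hB : H.IsIndepSet B) :
    (strongProd G H).IsIndepSet (A ×ˢ B) := by
  rintro ⟨x₁, x₂⟩ ⟨hx₁, hx₂⟩ ⟨y₁, y₂⟩ ⟨hy₁, hy₂⟩ hxy ⟨-, h₁, h₂⟩
  obtain rfl : x₁ = y₁ := h₁.resolve_right fun h => hA hx₁ hy₁ h.ne h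
  obtain rfl : x₂ = y₂ := h₂.resolve_right fun h => hB hx₂ hy₂ h.ne h
  exact hxy rfl

theorem Set.exists_subset_pair_of_ncard_le_two [Nonempty V] {s : Set V} (hs : s.Finite)
    (h : s.ncard ≤ 2) : ∃ u w, s ⊆ {u, w} := by
  rcases s.eq_empty_or_nonempty with rfl | ⟨u, hu⟩
  · exact ⟨Classical.arbitrary V, Classical.arbitrary V, Set.empty_subset _⟩
  have : (s \ {u}).ncard ≤ 1 := by
    rw [Set.ncard_sdiff_singleton_of_mem hu]
    omega
  obtain ⟨w, hw⟩ := (Set.ncard_le_one_iff_subset_singleton hs.sdiff).1 this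
  refine ⟨u, w, fun x hx => ?_⟩
  by_cases hxu : x = u
  · exact .inl hxu
  · exact .inr (hw ⟨hx, hxu⟩)

theorem IsDomSet.three_le_ncard [Finite V] [Nonempty V] {G : SimpleGraph V} {D : Set V}
    (hG : ∀ u w : V, ∃ v, v ∉ closedNbhd G u ∧ v ∉ closedNbhd G w) (hD : IsDomSet G D) :
    3 ≤ D.ncard := by
  by_contra! hlt
  obtain ⟨u, w, hsub⟩ := Set.exists_subset_pair_of_ncard_le_two D.toFinite (by omega)
  obtain ⟨v, hvu, hvw⟩ := hG u w
  obtain ⟨x, hx, hxv⟩ := hD.exists_eq_or_adj v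
  rcases hsub hx with rfl | rfl
  · exact hvu (hxv.imp Eq.symm id)
  · exact hvw (hxv.imp Eq.symm id)

theorem not_wellDominated_of_ncard_lt {G : SimpleGraph V} {D D' : Set V} (hD : IsMinlDomSet G D)
    (hD' : IsDomSet G D') (hlt : D'.ncard < D.ncard) : ¬ WellDominated G :=
  fun hG => (hG D D' hD hD').not_gt hlt

theorem strongProd_cycleGraph_four_exists_notMem_closedNbhd (u w : Fin 4 × Fin 4) :
    ∃ v, v ∉ closedNbhd (strongProd (cycleGraph 4) (cycleGraph 4)) u ∧
      v ∉ closedNbhd (strongProd (cycleGraph 4) (cycleGraph 4)) w := by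
  revert u w
  unfold closedNbhd
  decide

theorem strongProd_cycleGraph_four_isDomSet_diag :
    IsDomSet (strongProd (cycleGraph 4) (cycleGraph 4)) {(0, 0), (1, 1), (2, 2)} := by
  unfold IsDomSet
  decide

theorem cycleGraph_four_isDomSet_pair : IsDomSet (cycleGraph 4) {0, 2} := by
  unfold IsDomSet
  decide

theorem cycleGraph_four_isIndepSet_pair : (cycleGraph 4).IsIndepSet {0, 2} := by
  unfold SimpleGraph.IsIndepSet Set.Pairwise
  decide

theorem stmt19 :
    domNum (strongProd (cycleGraph 4) (cycleGraph 4)) = 3 ∧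
    (∃ D : Set (Fin 4 × Fin 4),
      IsMinlDomSet (strongProd (cycleGraph 4) (cycleGraph 4)) D ∧ D.ncard = 4) ∧
    ¬ WellDominated (strongProd (cycleGraph 4) (cycleGraph 4)) := by
  have hdiag : ({(0, 0), (1, 1), (2, 2)} : Set (Fin 4 × Fin 4)).ncard = 3 := by
    rw [Set.ncard_eq_toFinset_card']
    rfl
  have hsq : (({0, 2} : Set (Fin 4)) ×ˢ ({0, 2} : Set (Fin 4))).ncard = 4 := by
    rw [Set.ncard_prod, Set.ncard_pair (by decide)]
  have hminl : IsMinlDomSet (strongProd (cycleGraph 4) (cycleGraph 4))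
      (({0, 2} : Set (Fin 4)) ×ˢ {0, 2}) :=
    (cycleGraph_four_isDomSet_pair.prod cycleGraph_four_isDomSet_pair).isMinlDomSet_of_isIndepSet
      (cycleGraph_four_isIndepSet_pair.strongProd cycleGraph_four_isIndepSet_pair)
  have hdom := strongProd_cycleGraph_four_isDomSet_diag
  refine ⟨IsLeast.csInf_eq ⟨⟨_, hdom, hdiag⟩, ?_⟩, ⟨_, hminl, hsq⟩,
    not_wellDominated_of_ncard_lt hminl hdom (by omega)⟩
  rintro n ⟨D, hD, rfl⟩
  exact hD.three_le_ncard strongProd_cycleGraph_four_exists_notMem_closedNbhd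
end
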